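/- arXiv:1401.6807 — 5 statements merged into one kernel-verified Lean document; each statement's English description precedes it below -/
import Mathlib

section
/- Suppose f : ℝⁿ → ℝ is locally Lipschitz and approximately convex at x, meaning: for every ε > 0 there exists δ > 0 such that f(ty+(1-t)z) ≤ t f(y) + (1-t) f(z) + ε t(1-t)‖y−z‖ for all y,z ∈ B(x,δ), t ∈ [0,1]. Then for every ε > 0 there exists δ > 0 such that for all y,z ∈ B(x,δ), f⁰(y, z−y) ≤ f(z) − f(y) + ε‖y−z‖, where f⁰ is the Clarke directional derivative. -/
open Metric Set Filter

/-- The Clarke directional derivative of `f` at `x` in direction `d`. -/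
noncomputable def clarkeDeriv {E : Type*} [NormedAddCommGroup E] [NormedSpace ℝ E]
    (f : E → ℝ) (x d : E) : ℝ :=
  Filter.limsup (fun p : E × ℝ => (f (p.1 + p.2 • d) - f p.1) / p.2)
    ((nhds x) ×ˢ (nhdsWithin 0 (Set.Ioi 0)))

theorem stmt_2 (n : ℕ) (f : EuclideanSpace ℝ (Fin n) → ℝ) (hf : LocallyLipschitz f)
    (x : EuclideanSpace ℝ (Fin n))
    (happ : ∀ ε > (0:ℝ), ∃ δ > (0:ℝ), ∀ y ∈ ball x δ, ∀ z ∈ ball x δ, ∀ t ∈ Icc (0:ℝ) 1,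
      f (t • y + (1 - t) • z) ≤ t * f y + (1 - t) * f z + ε * (t * (1 - t)) * ‖y - z‖) :
    ∀ ε > (0:ℝ), ∃ δ > (0:ℝ), ∀ y ∈ ball x δ, ∀ z ∈ ball x δ,
      clarkeDeriv f y (z - y) ≤ f z - f y + ε * ‖y - z‖ := by
  intro ε hε
  obtain ⟨δ₀, hδ₀, H⟩ := happ ε hε
  refine ⟨δ₀ / 2, by positivity, ?_⟩
  intro y hy z hz
  set d : EuclideanSpace ℝ (Fin n) := z - y with hd
  have hcont : Continuous f := hf.continuous
  -- lower bound (for coboundedness of the limsup)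
  obtain ⟨K, U, hU, hK⟩ := hf y
  obtain ⟨r₀, hr₀, hUb⟩ := Metric.mem_nhds_iff.mp hU
  set t₀ : ℝ := min 1 (r₀ / (2 * (‖d‖ + 1))) with ht₀
  have ht₀pos : 0 < t₀ := lt_min one_pos (by positivity)
  have hlow : ∀ᶠ p : (EuclideanSpace ℝ (Fin n)) × ℝ in
      (nhds y) ×ˢ (nhdsWithin 0 (Set.Ioi 0)),
      -((K : ℝ) * ‖d‖) ≤ (f (p.1 + p.2 • d) - f p.1) / p.2 := by
    have hmem : (ball y (r₀ / 2)) ×ˢ (Set.Ioo (0:ℝ) t₀) ∈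
        (nhds y) ×ˢ (nhdsWithin 0 (Set.Ioi 0)) :=
      Filter.prod_mem_prod (ball_mem_nhds _ (by positivity))
        (Ioo_mem_nhdsGT_of_mem ⟨le_rfl, ht₀pos⟩)
    filter_upwards [hmem] with p hp
    obtain ⟨hp1, hp2⟩ := hp
    have ht : 0 < p.2 := hp2.1
    have hdnn : (0:ℝ) ≤ ‖d‖ := norm_nonneg _
    have htd : p.2 * ‖d‖ < r₀ / 2 := by
      have h1 : p.2 < r₀ / (2 * (‖d‖ + 1)) := lt_of_lt_of_le hp2.2 (min_le_right _ _)
      have h2 : 0 < 2 * (‖d‖ + 1) := by positivity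
      rw [lt_div_iff₀ h2] at h1
      nlinarith
    have hmem1 : p.1 ∈ U := hUb (by
      simpa using lt_trans (mem_ball.mp hp1) (by linarith))
    have hmem2 : p.1 + p.2 • d ∈ U := by
      apply hUb
      have : dist (p.1 + p.2 • d) y ≤ dist (p.1 + p.2 • d) p.1 + dist p.1 y :=
        dist_triangle _ _ _
      have hdd : dist (p.1 + p.2 • d) p.1 = p.2 * ‖d‖ := by
        rw [dist_eq_norm, add_sub_cancel_left, norm_smul, Real.norm_eq_abs,
          abs_of_pos ht]
      have hb : dist p.1 y < r₀ / 2 := mem_ball.mp hp1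
      exact mem_ball.mpr (by rw [hdd] at this; linarith)
    have hdist := hK.dist_le_mul _ hmem2 _ hmem1
    have hdd2 : dist (p.1 + p.2 • d) p.1 = p.2 * ‖d‖ := by
      rw [dist_eq_norm, add_sub_cancel_left, norm_smul, Real.norm_eq_abs, abs_of_pos ht]
    rw [hdd2, Real.dist_eq] at hdist
    rw [le_div_iff₀ ht]
    have habs : -((K:ℝ) * (p.2 * ‖d‖)) ≤ f (p.1 + p.2 • d) - f p.1 :=
      neg_le_of_abs_le hdist
    nlinarith
  have hnorm : ‖y - z‖ = ‖d‖ := by rw [hd, norm_sub_rev]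
  -- main bound
  apply le_of_forall_pos_le_add
  intro η hη
  obtain ⟨r₁, hr₁, hy1⟩ := Metric.continuous_iff.mp hcont y (η / 2) (by positivity)
  obtain ⟨r₂, hr₂, hz1⟩ := Metric.continuous_iff.mp hcont z (η / 2) (by positivity)
  set r : ℝ := min (min r₁ r₂) (δ₀ / 2) with hr
  have hrpos : 0 < r := lt_min (lt_min hr₁ hr₂) (by positivity)
  have hev : ∀ᶠ p : (EuclideanSpace ℝ (Fin n)) × ℝ in
      (nhds y) ×ˢ (nhdsWithin 0 (Set.Ioi 0)),
      (f (p.1 + p.2 • d) - f p.1) / p.2 ≤ f z - f y + ε * ‖y - z‖ + η := by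
    have hmem : (ball y r) ×ˢ (Set.Ioo (0:ℝ) 1) ∈
        (nhds y) ×ˢ (nhdsWithin 0 (Set.Ioi 0)) :=
      Filter.prod_mem_prod (ball_mem_nhds _ hrpos)
        (Ioo_mem_nhdsGT_of_mem ⟨le_rfl, one_pos⟩)
    filter_upwards [hmem] with p hp
    obtain ⟨hp1, hp2⟩ := hp
    have ht : 0 < p.2 := hp2.1
    set w : EuclideanSpace ℝ (Fin n) := p.1 + d with hw
    have hpy : dist p.1 y < r := mem_ball.mp hp1
    have hrle : r ≤ δ₀ / 2 := min_le_right _ _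
    have hyx : dist y x < δ₀ / 2 := mem_ball.mp hy
    have hzx : dist z x < δ₀ / 2 := mem_ball.mp hz
    have hwz : dist w z = dist p.1 y := by
      rw [dist_eq_norm, dist_eq_norm, hw, hd]
      congr 1
      abel
    have hmemy' : p.1 ∈ ball x δ₀ := by
      have := dist_triangle p.1 y x
      exact mem_ball.mpr (by linarith)
    have hmemw : w ∈ ball x δ₀ := by
      have := dist_triangle w z x
      rw [hwz] at this
      exact mem_ball.mpr (by linarith)
    have hconv := H w hmemw p.1 hmemy' p.2 ⟨ht.le, hp2.2.le⟩
    have heq : p.2 • w + (1 - p.2) • p.1 = p.1 + p.2 • d := by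
      rw [hw]; module
    have hnw : ‖w - p.1‖ = ‖d‖ := by rw [hw, add_sub_cancel_left]
    rw [heq, hnw] at hconv
    -- quotient bound
    have hq : (f (p.1 + p.2 • d) - f p.1) / p.2 ≤ f w - f p.1 + ε * ‖d‖ := by
      rw [div_le_iff₀ ht]
      have hdnn : (0:ℝ) ≤ ‖d‖ := norm_nonneg _
      nlinarith [hp2.2, mul_nonneg (mul_nonneg hε.le (mul_pos ht ht).le) hdnn]
    have h1 : |f p.1 - f y| < η / 2 := by
      have := hy1 p.1 (lt_of_lt_of_le hpy (le_trans (min_le_left _ _) (min_le_left _ _)))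
      rwa [Real.dist_eq] at this
    have h2 : |f w - f z| < η / 2 := by
      have := hz1 w (by
        rw [hwz]
        exact lt_of_lt_of_le hpy (le_trans (min_le_left _ _) (min_le_right _ _)))
      rwa [Real.dist_eq] at this
    have h1' := abs_lt.mp h1
    have h2' := abs_lt.mp h2
    rw [hnorm]
    linarith [hq]
  have hcob : Filter.IsCoboundedUnder (· ≤ ·)
      ((nhds y) ×ˢ (nhdsWithin 0 (Set.Ioi 0)))
      (fun p : (EuclideanSpace ℝ (Fin n)) × ℝ => (f (p.1 + p.2 • d) - f p.1) / p.2) := by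
    have hb : Filter.IsBoundedUnder (· ≥ ·)
        ((nhds y) ×ˢ (nhdsWithin 0 (Set.Ioi 0)))
        (fun p : (EuclideanSpace ℝ (Fin n)) × ℝ => (f (p.1 + p.2 • d) - f p.1) / p.2) :=
      ⟨-((K : ℝ) * ‖d‖), by simpa [Filter.eventually_map] using hlow⟩
    exact hb.isCoboundedUnder_le
  exact Filter.limsup_le_of_le hcob hev
end

section
/- Suppose f : ℝⁿ → ℝ is locally Lipschitz and −f is approximately convex at x (i.e., f is approximately concave at x): for every ε > 0 there exists δ > 0 such that for all 0 < t < 1 and y,z ∈ B(x,δ), f(y) ≤ f(z) + t⁻¹(f(z+t(y−z)) − f(z)) + ε(1−t)‖z−y‖. Then for every ε > 0 there exists δ > 0 such that f(y) ≤ f(z) + f⁰(z, y−z) + ε‖y−z‖ for all y,z ∈ B(x,δ), where f⁰ denotes the Clarke directional derivative. -/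
open Metric Set Filter

theorem stmt_3 (n : ℕ) (f : EuclideanSpace ℝ (Fin n) → ℝ) (hf : LocallyLipschitz f)
    (x : EuclideanSpace ℝ (Fin n))
    (happ : ∀ ε > (0:ℝ), ∃ δ > (0:ℝ), ∀ t ∈ Ioo (0:ℝ) 1, ∀ y ∈ ball x δ, ∀ z ∈ ball x δ,
      f y ≤ f z + t⁻¹ * (f (z + t • (y - z)) - f z) + ε * (1 - t) * ‖z - y‖) :
    ∀ ε > (0:ℝ), ∃ δ > (0:ℝ), ∀ y ∈ ball x δ, ∀ z ∈ ball x δ,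
      f y ≤ f z + clarkeDeriv f z (y - z) + ε * ‖y - z‖ := by
  intro ε hε
  obtain ⟨δ, hδ, h⟩ := happ ε hε
  refine ⟨δ, hδ, fun y hy z hz => ?_⟩
  set d := y - z with hd
  set L : Filter (EuclideanSpace ℝ (Fin n) × ℝ) := (nhds z) ×ˢ (nhdsWithin 0 (Ioi 0)) with hL
  set g : EuclideanSpace ℝ (Fin n) × ℝ → ℝ := fun p => (f (p.1 + p.2 • d) - f p.1) / p.2 with hg
  -- boundedness above of the difference quotient
  obtain ⟨K, U, hU, hLip⟩ := hf z
  have htend : Tendsto (fun p : EuclideanSpace ℝ (Fin n) × ℝ => p.1 + p.2 • d) L (nhds z) := by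
    have h2 : Tendsto (fun p : EuclideanSpace ℝ (Fin n) × ℝ => p.2) L (nhds (0:ℝ)) :=
      tendsto_snd.mono_right nhdsWithin_le_nhds
    have := Tendsto.add (tendsto_fst : Tendsto Prod.fst L (nhds z)) (h2.smul_const d)
    simpa using this
  have hbddev : ∀ᶠ p in L, g p ≤ K * ‖d‖ := by
    have e1 : ∀ᶠ p in L, p.1 ∈ U := tendsto_fst.eventually hU
    have e2 : ∀ᶠ p in L, p.1 + p.2 • d ∈ U := htend.eventually hU
    have e3 : ∀ᶠ p in L, (0:ℝ) < p.2 :=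
      tendsto_snd.eventually (eventually_mem_nhdsWithin.mono fun t ht => ht)
    filter_upwards [e1, e2, e3] with p h1 h2 h3
    have hdist : dist (f (p.1 + p.2 • d)) (f p.1) ≤ K * dist (p.1 + p.2 • d) p.1 :=
      hLip.dist_le_mul _ h2 _ h1
    have hd2 : dist (p.1 + p.2 • d) p.1 = p.2 * ‖d‖ := by
      rw [dist_eq_norm]
      simp [norm_smul, abs_of_pos h3]
    rw [hd2] at hdist
    have : f (p.1 + p.2 • d) - f p.1 ≤ K * (p.2 * ‖d‖) :=
      le_trans (le_abs_self _) (by rwa [Real.dist_eq] at hdist)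
    rw [hg]
    rw [div_le_iff₀ h3]
    nlinarith
  have hbdd : IsBoundedUnder (· ≤ ·) L g := ⟨K * ‖d‖, eventually_map.2 hbddev⟩
  -- frequently lower bound
  set c : ℝ := f y - f z - ε * ‖d‖ with hc
  have hev : ∀ᶠ t in nhdsWithin (0:ℝ) (Ioi 0), c ≤ g (z, t) := by
    have hmem : Ioo (0:ℝ) 1 ∈ nhdsWithin (0:ℝ) (Ioi 0) :=
      Ioo_mem_nhdsGT_of_mem (by constructor <;> norm_num)
    filter_upwards [hmem] with t ht
    have key := h t ht y hy z hz
    have hgz : g (z, t) = t⁻¹ * (f (z + t • d) - f z) := by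
      rw [hg]; simp [div_eq_inv_mul]
    rw [hgz, hc]
    have hnorm : ‖z - y‖ = ‖d‖ := by rw [hd, norm_sub_rev]
    rw [hnorm, ← hd] at key
    have hnn : (0:ℝ) ≤ ‖d‖ := norm_nonneg _
    nlinarith [key, ht.1, ht.2, hε, mul_nonneg (mul_nonneg hε.le ht.1.le) hnn]
  have hmap : Tendsto (fun t : ℝ => ((z : EuclideanSpace ℝ (Fin n)), t))
      (nhdsWithin (0:ℝ) (Ioi 0)) L :=
    tendsto_const_nhds.prodMk tendsto_id
  have hfreq : ∃ᶠ p in L, c ≤ g p := hmap.frequently hev.frequently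
  have hle : c ≤ clarkeDeriv f z d := le_limsup_of_frequently_le hfreq hbdd
  rw [hc] at hle
  linarith
end

section
/- Let f : ℝⁿ → ℝ be locally Lipschitz and suppose f is lower-C¹ at x in the sense that for every ε > 0 there is δ > 0 with f(ty+(1-t)z) ≤ t f(y)+(1-t) f(z)+ε t(1-t)‖y−z‖ for all y,z ∈ B(x,δ), t ∈ [0,1]. Fix c > 0. Then for all sequences x_j → x, y_j → x with y_j ≠ x_j, there exist ε_j → 0⁺ such that f(y_j) ≤ m_j(y_j) + ε_j‖y_j − x_j‖, where m_j is the downshifted tangent plane m_j(·) = f(y_j) + g_jᵀ(·−y_j) − s_j, g_j ∈ ∂f(y_j), s_j = [f(y_j)+g_jᵀ(x_j−y_j) − f(x_j) + c‖y_j−x_j‖²]₊. -/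
/-!
On a ball where `f` is `ε`-approximately convex and Lipschitz, every difference quotient
`(f (a + t • d) - f a) / t` with `t ∈ (0, 1]` is at most `f (a + d) - f a + ε ‖d‖`; passing to
the limsup, the Clarke derivative satisfies `f⁰(y; z - y) ≤ f z - f y + ε ‖z - y‖`. Hence a Clarke
subgradient `g` at `y` obeys `⟪g, z - y⟫ ≤ f z - f y + ε ‖z - y‖`, which bounds the downshift by
`(ε + c ‖y - z‖) ‖y - z‖`. Since `ε` can be taken arbitrarily small near `x`, the downshift is
`o(‖y_j - x_j‖)`, and `ε_j` is its ratio to `‖y_j - x_j‖`, pushed up to be positive.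
-/

open Metric Set Filter
open scoped Topology RealInnerProductSpace

open Asymptotics
open scoped NNReal

section NormedSpace

variable {E : Type*} [NormedAddCommGroup E] [NormedSpace ℝ E] {f : E → ℝ} {s : Set E}

def ApproxConvexOn (ε : ℝ) (s : Set E) (f : E → ℝ) : Prop :=
  ∀ y ∈ s, ∀ z ∈ s, ∀ t ∈ Icc (0 : ℝ) 1,
    f (t • y + (1 - t) • z) ≤ t * f y + (1 - t) * f z + ε * (t * (1 - t)) * ‖y - z‖

theorem ApproxConvexOn.mono {ε : ℝ} {t : Set E} (hf : ApproxConvexOn ε s f) (hts : t ⊆ s) :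
    ApproxConvexOn ε t f :=
  fun y hy z hz => hf y (hts hy) z (hts hz)

theorem ApproxConvexOn.div_le {ε : ℝ} (hf : ApproxConvexOn ε s f) (hε : 0 ≤ ε) {a d : E}
    (ha : a ∈ s) (had : a + d ∈ s) {t : ℝ} (ht : t ∈ Ioc 0 1) :
    (f (a + t • d) - f a) / t ≤ f (a + d) - f a + ε * ‖d‖ := by
  have h := hf (a + d) had a ha t (Ioc_subset_Icc_self ht)
  rw [show t • (a + d) + (1 - t) • a = a + t • d by module, add_sub_cancel_left] at h
  rw [div_le_iff₀ ht.1]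
  nlinarith [mul_nonneg (mul_nonneg (mul_nonneg hε ht.1.le) ht.1.le) (norm_nonneg d)]

theorem isCoboundedUnder_clarke_quotient {K : ℝ≥0} {y : E} (hK : LipschitzOnWith K f s)
    (hs : s ∈ 𝓝 y) (d : E) :
    IsCoboundedUnder (· ≤ ·) (𝓝 y ×ˢ 𝓝[>] 0)
      (fun p : E × ℝ => (f (p.1 + p.2 • d) - f p.1) / p.2) := by
  refine IsBoundedUnder.isCoboundedUnder_le ⟨-(K * ‖d‖), ?_⟩
  have hmove : Tendsto (fun p : E × ℝ => p.1 + p.2 • d) (𝓝 y ×ˢ 𝓝[>] 0) (𝓝 y) := by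
    simpa using (tendsto_fst (f := 𝓝 y) (g := 𝓝[>] (0 : ℝ))).add
      ((tendsto_snd.mono_right nhdsWithin_le_nhds).smul_const d)
  rw [eventually_map]
  have hs' : ∀ᶠ a in 𝓝 y, a ∈ s := hs
  filter_upwards [hs'.prod_mk (eventually_mem_nhdsWithin (s := Ioi (0 : ℝ)) (a := 0)),
    hmove.eventually hs] with p ⟨hp, ht⟩ hpd
  have hlip : |f (p.1 + p.2 • d) - f p.1| ≤ K * (p.2 * ‖d‖) := by
    have h := hK.dist_le_mul _ hpd _ hp
    rwa [Real.dist_eq, dist_eq_norm, add_sub_cancel_left, norm_smul, Real.norm_of_nonneg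
      (mem_Ioi.1 ht).le] at h
  rw [le_div_iff₀ (mem_Ioi.1 ht)]
  linarith [(abs_le.1 hlip).1]

theorem ApproxConvexOn.clarkeDeriv_le {ε : ℝ} {K : ℝ≥0} (hf : ApproxConvexOn ε s f) (hε : 0 ≤ ε)
    (hs : IsOpen s) (hK : LipschitzOnWith K f s) {y z : E} (hy : y ∈ s) (hz : z ∈ s) :
    clarkeDeriv f y (z - y) ≤ f z - f y + ε * ‖z - y‖ := by
  refine le_of_forall_pos_le_add fun η hη =>
    limsup_le_of_le (isCoboundedUnder_clarke_quotient hK (hs.mem_nhds hy) _) ?_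
  have hshift : Tendsto (· + (z - y)) (𝓝 y) (𝓝 z) := by
    simpa using (continuous_add_const (z - y)).tendsto y
  have hcont : Tendsto (fun a => f (a + (z - y)) - f a) (𝓝 y) (𝓝 (f z - f y)) :=
    ((hK.continuousOn.continuousAt (hs.mem_nhds hz)).tendsto.comp hshift).sub
      (hK.continuousOn.continuousAt (hs.mem_nhds hy))
  have hnear : ∀ᶠ a in 𝓝 y, a ∈ s ∧ a + (z - y) ∈ s ∧ f (a + (z - y)) - f a ≤ f z - f y + η :=
    (hs.eventually_mem hy).and <| (hshift.eventually (hs.mem_nhds hz)).and <|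
      hcont.eventually (eventually_le_nhds (by simp [hη]))
  filter_upwards [hnear.prod_mk (Ioc_mem_nhdsGT one_pos)] with p ⟨⟨ha, had, hdiff⟩, ht⟩
  linarith [hf.div_le hε ha had ht]

end NormedSpace

section InnerProductSpace

variable {E : Type*} [NormedAddCommGroup E] [InnerProductSpace ℝ E] {f : E → ℝ} {s : Set E}

theorem ApproxConvexOn.inner_le_of_clarkeDeriv {ε : ℝ} {K : ℝ≥0} (hf : ApproxConvexOn ε s f)
    (hε : 0 ≤ ε) (hs : IsOpen s) (hK : LipschitzOnWith K f s) {g y z : E}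
    (hg : ∀ d, ⟪g, d⟫ ≤ clarkeDeriv f y d) (hy : y ∈ s) (hz : z ∈ s) :
    ⟪g, z - y⟫ ≤ f z - f y + ε * ‖z - y‖ :=
  (hg _).trans (hf.clarkeDeriv_le hε hs hK hy hz)

/-- The downshift `s_j` of the tangent plane at `y = y_j` with slope `g = g_j`, for `x = x_j`. -/
noncomputable def downshift (f : E → ℝ) (c : ℝ) (g y x : E) : ℝ :=
  max (f y + ⟪g, x - y⟫ - f x + c * ‖y - x‖ ^ 2) 0

theorem downshift_nonneg (f : E → ℝ) (c : ℝ) (g y x : E) : 0 ≤ downshift f c g y x :=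
  le_max_right _ _

theorem downshift_le {ε c : ℝ} {K : ℝ≥0} (hf : ApproxConvexOn ε s f) (hε : 0 ≤ ε) (hc : 0 ≤ c)
    (hs : IsOpen s) (hK : LipschitzOnWith K f s) {g y x : E}
    (hg : ∀ d, ⟪g, d⟫ ≤ clarkeDeriv f y d) (hy : y ∈ s) (hx : x ∈ s) :
    downshift f c g y x ≤ (ε + c * ‖y - x‖) * ‖y - x‖ := by
  have hsub := hf.inner_le_of_clarkeDeriv hε hs hK hg hy hx
  rw [norm_sub_rev] at hsub
  refine max_le ?_ (by positivity)
  nlinarith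

theorem isLittleO_downshift {ι : Type*} {l : Filter ι} (hf : LocallyLipschitz f) {x : E}
    (hlowerC1 : ∀ ε > 0, ∃ δ > 0, ApproxConvexOn ε (ball x δ) f) {c : ℝ} (hc : 0 ≤ c)
    {u v g : ι → E} (hu : Tendsto u l (𝓝 x)) (hv : Tendsto v l (𝓝 x))
    (hg : ∀ i d, ⟪g i, d⟫ ≤ clarkeDeriv f (v i) d) :
    (fun i => downshift f c (g i) (v i) (u i)) =o[l] fun i => ‖v i - u i‖ := by
  refine isLittleO_iff.2 fun ε hε => ?_
  obtain ⟨δ₁, hδ₁, hconv⟩ := hlowerC1 (ε / 2) (half_pos hε)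
  obtain ⟨K, t, ht, hK⟩ := hf x
  obtain ⟨δ₂, hδ₂, hδ₂t⟩ := Metric.mem_nhds_iff.1 ht
  set δ := min δ₁ δ₂
  have hconv' := hconv.mono (ball_subset_ball (min_le_left δ₁ δ₂))
  have hK' := hK.mono ((ball_subset_ball (min_le_right δ₁ δ₂)).trans hδ₂t)
  have hball (w : ι → E) (hw : Tendsto w l (𝓝 x)) : ∀ᶠ i in l, w i ∈ ball x δ :=
    hw.eventually (ball_mem_nhds x (lt_min hδ₁ hδ₂))
  have hclose : ∀ᶠ i in l, c * ‖v i - u i‖ ≤ ε / 2 := by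
    have h : Tendsto (fun i => c * ‖v i - u i‖) l (𝓝 0) := by
      simpa using ((hv.sub hu).norm).const_mul c
    exact h.eventually (eventually_le_nhds (half_pos hε))
  filter_upwards [hball u hu, hball v hv, hclose] with i hui hvi hci
  rw [Real.norm_of_nonneg (downshift_nonneg _ _ _ _ _), norm_norm]
  calc downshift f c (g i) (v i) (u i) ≤ (ε / 2 + c * ‖v i - u i‖) * ‖v i - u i‖ :=
        downshift_le hconv' (half_pos hε).le hc isOpen_ball hK' (hg i) hvi hui
    _ ≤ ε * ‖v i - u i‖ := by gcongr; linarith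

end InnerProductSpace

theorem exists_pos_tendsto_zero_ge {u : ℕ → ℝ} (hu : Tendsto u atTop (𝓝 0)) :
    ∃ v : ℕ → ℝ, (∀ j, 0 < v j) ∧ Tendsto v atTop (𝓝 0) ∧ ∀ j, u j ≤ v j :=
  ⟨fun j => max (u j) (1 / (j + 1)), fun _ => lt_max_of_lt_right Nat.one_div_pos_of_nat,
    by simpa using hu.max tendsto_one_div_add_atTop_nhds_zero_nat, fun _ => le_max_left _ _⟩

theorem stmt_6 (n : ℕ) (f : EuclideanSpace ℝ (Fin n) → ℝ) (hf : LocallyLipschitz f)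
    (x : EuclideanSpace ℝ (Fin n)) (c : ℝ) (hc : 0 < c)
    (hlowerC1 : ∀ ε > (0:ℝ), ∃ δ > (0:ℝ), ∀ y ∈ ball x δ, ∀ z ∈ ball x δ, ∀ t ∈ Icc (0:ℝ) 1,
      f (t • y + (1 - t) • z) ≤ t * f y + (1 - t) * f z + ε * (t * (1 - t)) * ‖y - z‖)
    (xj yj : ℕ → EuclideanSpace ℝ (Fin n))
    (hxj : Tendsto xj atTop (𝓝 x)) (hyj : Tendsto yj atTop (𝓝 x))
    (hne : ∀ j, yj j ≠ xj j)
    (gj : ℕ → EuclideanSpace ℝ (Fin n))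
    (hgj : ∀ j, ∀ d, ⟪gj j, d⟫ ≤ clarkeDeriv f (yj j) d)
    (sj : ℕ → ℝ)
    (hsj : ∀ j, sj j =
      max (f (yj j) + ⟪gj j, xj j - yj j⟫ - f (xj j) + c * ‖yj j - xj j‖ ^ 2) 0)
    (m : ℕ → EuclideanSpace ℝ (Fin n) → ℝ)
    (hm : ∀ j z, m j z = f (yj j) + ⟪gj j, z - yj j⟫ - sj j) :
    ∃ εj : ℕ → ℝ, (∀ j, 0 < εj j) ∧ Tendsto εj atTop (𝓝 0) ∧
      ∀ j, f (yj j) ≤ m j (yj j) + εj j * ‖yj j - xj j‖ := by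
  have hdist : ∀ j, 0 < ‖yj j - xj j‖ := fun j => norm_pos_iff.2 (sub_ne_zero.2 (hne j))
  have hsmall := isLittleO_downshift hf hlowerC1 hc.le hxj hyj hgj
  obtain ⟨εj, hpos, hlim, hle⟩ := exists_pos_tendsto_zero_ge
    ((isLittleO_iff_tendsto fun j h => absurd h (hdist j).ne').1 hsmall)
  refine ⟨εj, hpos, hlim, fun j => ?_⟩
  have hs : sj j ≤ εj j * ‖yj j - xj j‖ := by
    rw [hsj j]
    exact (div_le_iff₀ (hdist j)).1 (hle j)
  rw [hm, sub_self, inner_zero_right]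
  linarith
end

section
/- Let f : ℝⁿ → ℝ be locally Lipschitz and upper-C¹ at x, meaning −f is approximately convex at x. Then for all sequences x_j → x, y_j → x there exist ε_j → 0⁺ such that f(y_j) ≤ f(x_j) + f⁰(x_j, y_j − x_j) + ε_j‖y_j − x_j‖, i.e., the standard oracle plane m♯_{y_j}(·,x_j) = f(x_j) + g_jᵀ(·−x_j) with g_j ∈ ∂f(x_j) attaining g_jᵀ(y_j−x_j) = f⁰(x_j, y_j−x_j) satisfies f(y_j) ≤ m♯_{y_j}(y_j,x_j) + ε_j‖y_j − x_j‖. -/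
/-!
For `y, z` near `x`, approximate convexity of `-f` bounds the difference quotient
`(f (z + t • (y - z)) - f z) / t` from below by `f y - f z - ε ‖z - y‖` for every `t ∈ (0, 1)`,
and the Clarke derivative `f⁰(z, y - z)` dominates these quotients. Hence for each fixed `ε > 0`
eventually `f (y j) - f (x j) - f⁰(x j, y j - x j) ≤ ε ‖y j - x j‖`, and the ratios of the two
sides, made positive by adding `1 / (j + 1)`, are the required `ε j → 0`.
-/

open Metric Set Filter
open scoped Topology RealInnerProductSpace

theorem exists_pos_tendsto_zero_forall_le_mul {a b : ℕ → ℝ} (hb : ∀ j, 0 ≤ b j)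
    (ha : ∀ j, b j = 0 → a j ≤ 0) (h : ∀ ε > 0, ∀ᶠ j in atTop, a j ≤ ε * b j) :
    ∃ e : ℕ → ℝ, (∀ j, 0 < e j) ∧ Tendsto e atTop (𝓝 0) ∧ ∀ j, a j ≤ e j * b j := by
  set r : ℕ → ℝ := fun j => max (a j / b j) 0
  have hr : Tendsto r atTop (𝓝 0) := by
    refine tendsto_order.2 ⟨fun c hc => .of_forall fun j => hc.trans_le (le_max_right _ _),
      fun c hc => ?_⟩
    filter_upwards [h (c / 2) (half_pos hc)] with j hj
    exact (max_le (div_le_of_le_mul₀ (hb j) (half_pos hc).le hj) (half_pos hc).le).trans_lt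
      (half_lt_self hc)
  refine ⟨fun j => r j + 1 / (j + 1),
    fun j => add_pos_of_nonneg_of_pos (le_max_right _ _) Nat.one_div_pos_of_nat,
    by simpa using hr.add tendsto_one_div_add_atTop_nhds_zero_nat, fun j => ?_⟩
  rcases (hb j).eq_or_lt with h0 | hpos
  · rw [← h0, mul_zero]
    exact ha j h0.symm
  · calc a j = a j / b j * b j := (div_mul_cancel₀ _ hpos.ne').symm
      _ ≤ (r j + 1 / (j + 1)) * b j := by
        gcongr
        exact (le_max_left _ _).trans (le_add_of_nonneg_right Nat.one_div_pos_of_nat.le)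

section Clarke

variable {E : Type*} [NormedAddCommGroup E] [NormedSpace ℝ E] {f : E → ℝ}

theorem clarkeDeriv_zero (f : E → ℝ) (z : E) : clarkeDeriv f z 0 = 0 := by
  simp [clarkeDeriv]

/-- Without this bound the `limsup` defining `clarkeDeriv` would be a junk value. -/
theorem LocallyLipschitz.isBoundedUnder_le_clarkeQuotient (hf : LocallyLipschitz f) (z d : E) :
    IsBoundedUnder (· ≤ ·) (𝓝 z ×ˢ 𝓝[>] (0 : ℝ))
      (fun p : E × ℝ => (f (p.1 + p.2 • d) - f p.1) / p.2) := by
  obtain ⟨K, s, hs, hK⟩ := hf z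
  have hmove : Tendsto (fun p : E × ℝ => p.1 + p.2 • d) (𝓝 z ×ˢ 𝓝[>] (0 : ℝ)) (𝓝 z) := by
    have hcont : Continuous fun p : E × ℝ => p.1 + p.2 • d := by fun_prop
    have hle : 𝓝 z ×ˢ 𝓝[>] (0 : ℝ) ≤ 𝓝 (z, 0) := by
      rw [nhds_prod_eq]
      exact Filter.prod_mono le_rfl nhdsWithin_le_nhds
    simpa using (hcont.tendsto (z, 0)).mono_left hle
  refine ⟨K * ‖d‖, eventually_map.2 ?_⟩
  filter_upwards [hmove.eventually_mem hs, tendsto_fst.eventually_mem hs,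
    tendsto_snd.eventually self_mem_nhdsWithin] with p hmoved hp (ht : 0 < p.2)
  refine div_le_of_le_mul₀ ht.le (by positivity) ?_
  calc f (p.1 + p.2 • d) - f p.1 ≤ dist (f (p.1 + p.2 • d)) (f p.1) := le_abs_self _
    _ ≤ K * dist (p.1 + p.2 • d) p.1 := hK.dist_le_mul _ hmoved _ hp
    _ = K * ‖d‖ * p.2 := by
      rw [dist_eq_norm, add_sub_cancel_left, norm_smul, Real.norm_of_nonneg ht.le]
      ring

theorem le_clarkeDeriv_of_eventually_le (hf : LocallyLipschitz f) {z d : E} {c : ℝ}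
    (h : ∀ᶠ t in 𝓝[>] (0 : ℝ), c ≤ (f (z + t • d) - f z) / t) : c ≤ clarkeDeriv f z d := by
  have hline : Tendsto (fun t : ℝ => (z, t)) (𝓝[>] 0) (𝓝 z ×ˢ 𝓝[>] (0 : ℝ)) :=
    tendsto_const_nhds.prodMk tendsto_id
  exact le_limsup_of_frequently_le (hline.frequently h.frequently)
    (hf.isBoundedUnder_le_clarkeQuotient z d)

theorem sub_sub_mul_norm_le_clarkeDeriv (hf : LocallyLipschitz f) {y z : E} {ε : ℝ}
    (hε : 0 ≤ ε) (h : ∀ t ∈ Ioo (0 : ℝ) 1,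
      f y ≤ f z + t⁻¹ * (f (z + t • (y - z)) - f z) + ε * (1 - t) * ‖z - y‖) :
    f y - f z - ε * ‖z - y‖ ≤ clarkeDeriv f z (y - z) := by
  refine le_clarkeDeriv_of_eventually_le hf ?_
  filter_upwards [Ioo_mem_nhdsGT one_pos] with t ht
  rw [div_eq_inv_mul]
  nlinarith [h t ht, mul_nonneg (mul_nonneg hε ht.1.le) (norm_nonneg (z - y))]

end Clarke

theorem stmt_7_general (n : ℕ) (f : EuclideanSpace ℝ (Fin n) → ℝ) (hf : LocallyLipschitz f)
    (x : EuclideanSpace ℝ (Fin n))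
    (hupperC1 : ∀ ε > (0:ℝ), ∃ δ > (0:ℝ), ∀ t ∈ Ioo (0:ℝ) 1, ∀ y ∈ ball x δ, ∀ z ∈ ball x δ,
      f y ≤ f z + t⁻¹ * (f (z + t • (y - z)) - f z) + ε * (1 - t) * ‖z - y‖)
    (xj yj : ℕ → EuclideanSpace ℝ (Fin n))
    (hxj : Tendsto xj atTop (𝓝 x)) (hyj : Tendsto yj atTop (𝓝 x))
    (gj : ℕ → EuclideanSpace ℝ (Fin n))
    (hattain : ∀ j, ⟪gj j, yj j - xj j⟫ = clarkeDeriv f (xj j) (yj j - xj j)) :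
    ∃ εj : ℕ → ℝ, (∀ j, 0 < εj j) ∧ Tendsto εj atTop (𝓝 0) ∧
      (∀ j, f (yj j) ≤ f (xj j) + clarkeDeriv f (xj j) (yj j - xj j) + εj j * ‖yj j - xj j‖) ∧
      (∀ j, f (yj j) ≤ f (xj j) + ⟪gj j, yj j - xj j⟫ + εj j * ‖yj j - xj j‖) := by
  have hdegenerate : ∀ j, ‖yj j - xj j‖ = 0 →
      f (yj j) - f (xj j) - clarkeDeriv f (xj j) (yj j - xj j) ≤ 0 := by
    intro j hj
    rw [norm_eq_zero, sub_eq_zero] at hj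
    simp [hj, clarkeDeriv_zero]
  have heventually : ∀ ε > 0, ∀ᶠ j in atTop,
      f (yj j) - f (xj j) - clarkeDeriv f (xj j) (yj j - xj j) ≤ ε * ‖yj j - xj j‖ := by
    intro ε hε
    obtain ⟨δ, hδ, hconv⟩ := hupperC1 ε hε
    filter_upwards [hxj.eventually_mem (ball_mem_nhds x hδ),
      hyj.eventually_mem (ball_mem_nhds x hδ)] with j hx hy
    have hbound := sub_sub_mul_norm_le_clarkeDeriv hf hε.le fun t ht => hconv t ht _ hy _ hx
    rw [norm_sub_rev] at hbound
    linarith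
  obtain ⟨εj, hpos, hlim, hle⟩ :=
    exists_pos_tendsto_zero_forall_le_mul (fun j => norm_nonneg _) hdegenerate heventually
  exact ⟨εj, hpos, hlim, fun j => by linarith [hle j], fun j => by linarith [hle j, hattain j]⟩

theorem stmt_7 (n : ℕ) (f : EuclideanSpace ℝ (Fin n) → ℝ) (hf : LocallyLipschitz f)
    (x : EuclideanSpace ℝ (Fin n))
    (hupperC1 : ∀ ε > (0:ℝ), ∃ δ > (0:ℝ), ∀ t ∈ Ioo (0:ℝ) 1, ∀ y ∈ ball x δ, ∀ z ∈ ball x δ,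
      f y ≤ f z + t⁻¹ * (f (z + t • (y - z)) - f z) + ε * (1 - t) * ‖z - y‖)
    (xj yj : ℕ → EuclideanSpace ℝ (Fin n))
    (hxj : Tendsto xj atTop (𝓝 x)) (hyj : Tendsto yj atTop (𝓝 x))
    (gj : ℕ → EuclideanSpace ℝ (Fin n))
    (hgj : ∀ j, ∀ d, ⟪gj j, d⟫ ≤ clarkeDeriv f (xj j) d)
    (hattain : ∀ j, ⟪gj j, yj j - xj j⟫ = clarkeDeriv f (xj j) (yj j - xj j)) :
    ∃ εj : ℕ → ℝ, (∀ j, 0 < εj j) ∧ Tendsto εj atTop (𝓝 0) ∧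
      (∀ j, f (yj j) ≤ f (xj j) + clarkeDeriv f (xj j) (yj j - xj j) + εj j * ‖yj j - xj j‖) ∧
      (∀ j, f (yj j) ≤ f (xj j) + ⟪gj j, yj j - xj j⟫ + εj j * ‖yj j - xj j‖) :=
  stmt_7_general n f hf x hupperC1 xj yj hxj hyj gj hattain
end

section
/- Let f : ℝⁿ → ℝ be locally Lipschitz and define the modified downshift cutting plane: m_y(·,x) = m_y↓(·,x) if m_y↓(y,x) ≥ m_y♯(y,x), and m_y(·,x) = m_y♯(·,x) otherwise, where m_y↓ is the downshifted tangent and m_y♯ is the standard oracle plane. If f is either lower-C¹ or upper-C¹ at x (in the approximate-convexity sense), then for all sequences x_j, y_j → x there exist ε_j → 0⁺ with f(y_j) ≤ m_{y_j}(y_j,x_j) + ε_j‖y_j−x_j‖. -/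
open Metric Set Filter
open scoped Topology RealInnerProductSpace

variable {E : Type*} [NormedAddCommGroup E] [NormedSpace ℝ E]

-- eventual Lipschitz bound on the difference quotients
lemma quot_bounds (f : E → ℝ) (hf : LocallyLipschitz f) (y d : E) :
    ∃ K : ℝ, 0 ≤ K ∧ ∀ᶠ p : E × ℝ in (𝓝 y) ×ˢ (𝓝[>] (0:ℝ)),
      |(f (p.1 + p.2 • d) - f p.1) / p.2| ≤ K * ‖d‖ := by
  obtain ⟨K, t, ht, hK⟩ := hf y
  refine ⟨K, K.coe_nonneg, ?_⟩
  have h1 : ∀ᶠ p : E × ℝ in (𝓝 y) ×ˢ (𝓝[>] (0:ℝ)), p.1 ∈ t ∧ p.1 + p.2 • d ∈ t := by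
    have hc : Tendsto (fun p : E × ℝ => p.1 + p.2 • d) ((𝓝 y) ×ˢ (𝓝[>] (0:ℝ))) (𝓝 y) := by
      have hc1 : Tendsto (fun p : E × ℝ => p.1) ((𝓝 y) ×ˢ (𝓝 (0:ℝ))) (𝓝 y) := tendsto_fst
      have hc2 : Tendsto (fun p : E × ℝ => p.2) ((𝓝 y) ×ˢ (𝓝 (0:ℝ))) (𝓝 (0:ℝ)) := tendsto_snd
      have hadd := hc1.add (hc2.smul_const d)
      rw [zero_smul, add_zero] at hadd
      exact hadd.mono_left (Filter.prod_mono le_rfl nhdsWithin_le_nhds)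
    exact (tendsto_fst.eventually ht).and (hc.eventually ht)
  have h2 : ∀ᶠ p : E × ℝ in (𝓝 y) ×ˢ (𝓝[>] (0:ℝ)), (0:ℝ) < p.2 := by
    have h2'' : ∀ᶠ t : ℝ in 𝓝[>] (0:ℝ), t ∈ Ioi (0:ℝ) := eventually_mem_nhdsWithin
    have h2' : ∀ᶠ t : ℝ in 𝓝[>] (0:ℝ), (0:ℝ) < t := h2''.mono fun t ht => ht
    exact tendsto_snd.eventually h2'
  filter_upwards [h1, h2] with p hp hp2
  have hL := hK.norm_sub_le hp.2 hp.1
  have : |f (p.1 + p.2 • d) - f p.1| ≤ K * (p.2 * ‖d‖) := by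
    rw [← Real.norm_eq_abs]
    calc ‖f (p.1 + p.2 • d) - f p.1‖ ≤ K * ‖(p.1 + p.2 • d) - p.1‖ := hL
    _ = K * (p.2 * ‖d‖) := by
        rw [add_sub_cancel_left, norm_smul, Real.norm_eq_abs, abs_of_pos hp2]
  rw [abs_div, abs_of_pos hp2, div_le_iff₀ hp2]
  calc |f (p.1 + p.2 • d) - f p.1| ≤ K * (p.2 * ‖d‖) := this
  _ = K * ‖d‖ * p.2 := by ring

lemma clarke_le (f : E → ℝ) (hf : LocallyLipschitz f) (hcont : Continuous f)
    (ε δ : ℝ) (hε : 0 ≤ ε) (x y d : E)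
    (hy : y ∈ ball x (δ/2)) (hyd : y + d ∈ ball x (δ/2))
    (hac : ∀ p ∈ ball x δ, ∀ q ∈ ball x δ, ∀ t ∈ Icc (0:ℝ) 1,
      f (t • p + (1-t) • q) ≤ t * f p + (1-t) * f q + ε * (t*(1-t)) * ‖p - q‖) :
    clarkeDeriv f y d ≤ f (y+d) - f y + ε * ‖d‖ := by
  obtain ⟨K, hK0, hKb⟩ := quot_bounds f hf y d
  have hcob : IsCoboundedUnder (· ≤ ·) ((𝓝 y) ×ˢ (𝓝[>] (0:ℝ)))
      (fun p : E × ℝ => (f (p.1 + p.2 • d) - f p.1) / p.2) :=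
    isCoboundedUnder_le_of_eventually_le _ (hKb.mono fun p hp => neg_le_of_abs_le hp)
  refine le_of_forall_pos_le_add fun η hη => ?_
  refine limsup_le_of_le hcob ?_
  -- eventual facts
  have hδ2 : (0:ℝ) < δ := by
    have := mem_ball.1 hy
    have h0 : 0 ≤ dist y x := dist_nonneg
    linarith
  have hball : ∀ᶠ z in 𝓝 y, z ∈ ball x δ ∧ z + d ∈ ball x δ := by
    have h1 : ∀ᶠ z in 𝓝 y, z ∈ ball x δ := by
      apply IsOpen.eventually_mem isOpen_ball
      exact mem_ball.2 (lt_of_lt_of_le (mem_ball.1 hy) (by linarith))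
    have h2 : ∀ᶠ z in 𝓝 y, z + d ∈ ball x δ := by
      have : Tendsto (fun z => z + d) (𝓝 y) (𝓝 (y + d)) :=
        (continuous_id.add continuous_const).tendsto' _ _ rfl
      exact this.eventually (IsOpen.eventually_mem isOpen_ball
        (mem_ball.2 (lt_of_lt_of_le (mem_ball.1 hyd) (by linarith))))
    exact h1.and h2
  have hclose : ∀ᶠ z in 𝓝 y, f (z + d) - f z ≤ f (y + d) - f y + η := by
    have : Tendsto (fun z => f (z + d) - f z) (𝓝 y) (𝓝 (f (y + d) - f y)) :=
      ((hcont.comp (continuous_id.add continuous_const)).sub hcont).tendsto' _ _ rfl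
    have := this.eventually (eventually_le_nhds (by linarith : f (y+d) - f y < f (y+d) - f y + η))
    exact this
  have ht1 : ∀ᶠ t in 𝓝[>] (0:ℝ), t ∈ Ioc (0:ℝ) 1 := by
    have : Ioc (0:ℝ) 1 ∈ 𝓝[>] (0:ℝ) :=
      Ioc_mem_nhdsGT_of_mem (by constructor <;> norm_num)
    exact this
  filter_upwards [tendsto_fst.eventually (hball.and hclose), tendsto_snd.eventually ht1]
    with p hp hpt
  obtain ⟨⟨hz1, hz2⟩, hzc⟩ := hp
  obtain ⟨hpt0, hpt1⟩ := hpt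
  set z := p.1; set t := p.2
  have key := hac (z + d) hz2 z hz1 t ⟨le_of_lt hpt0, hpt1⟩
  have heq : t • (z + d) + (1 - t) • z = z + t • d := by
    simp [smul_add, smul_sub, sub_smul, one_smul]; abel
  rw [heq] at key
  have hnd : ‖z + d - z‖ = ‖d‖ := by rw [add_sub_cancel_left]
  rw [hnd] at key
  rw [div_le_iff₀ hpt0]
  have hεt : ε * (t * (1-t)) * ‖d‖ ≤ t * (ε * ‖d‖) := by
    nlinarith [mul_nonneg (mul_nonneg (mul_nonneg hε hpt0.le) hpt0.le) (norm_nonneg d)]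
  calc f (z + t • d) - f z ≤ t * f (z+d) + (1-t) * f z + ε * (t * (1-t)) * ‖d‖ - f z := by linarith
  _ = t * (f (z+d) - f z) + ε * (t * (1-t)) * ‖d‖ := by ring
  _ ≤ t * (f (y+d) - f y + η) + t * (ε * ‖d‖) := by
      nlinarith [hpt0.le]
  _ = (f (y+d) - f y + ε * ‖d‖ + η) * t := by ring

lemma le_clarke (f : E → ℝ) (hf : LocallyLipschitz f)
    (ε δ : ℝ) (hε : 0 ≤ ε) (x y d : E)
    (hy : y ∈ ball x δ) (hyd : y + d ∈ ball x δ)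
    (hac : ∀ p ∈ ball x δ, ∀ q ∈ ball x δ, ∀ t ∈ Icc (0:ℝ) 1,
      -(f (t • p + (1-t) • q)) ≤ t * (-(f p)) + (1-t) * (-(f q)) + ε * (t*(1-t)) * ‖p - q‖) :
    f (y+d) - f y - ε * ‖d‖ ≤ clarkeDeriv f y d := by
  obtain ⟨K, hK0, hKb⟩ := quot_bounds f hf y d
  have hbdd : IsBoundedUnder (· ≤ ·) ((𝓝 y) ×ˢ (𝓝[>] (0:ℝ)))
      (fun p : E × ℝ => (f (p.1 + p.2 • d) - f p.1) / p.2) :=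
    ⟨K * ‖d‖, hKb.mono fun p hp => le_of_abs_le hp⟩
  apply le_limsup_of_frequently_le _ hbdd
  -- frequently: along the fiber {y} × (0,1]
  have hall : ∀ t ∈ Ioc (0:ℝ) 1,
      f (y+d) - f y - ε * ‖d‖ ≤ (f (y + t • d) - f y) / t := by
    intro t ⟨ht0, ht1⟩
    have key := hac (y + d) hyd y hy t ⟨ht0.le, ht1⟩
    have heq : t • (y + d) + (1 - t) • y = y + t • d := by
      simp [smul_add, smul_sub, sub_smul, one_smul]; abel
    rw [heq, add_sub_cancel_left] at key
    rw [le_div_iff₀ ht0]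
    nlinarith [mul_nonneg (mul_nonneg (mul_nonneg hε ht0.le) ht0.le) (norm_nonneg d)]
  have hev : ∀ᶠ t in 𝓝[>] (0:ℝ),
      f (y+d) - f y - ε * ‖d‖ ≤ (f (y + t • d) - f y) / t := by
    filter_upwards [Ioc_mem_nhdsGT_of_mem (show (0:ℝ) ∈ Ico (0:ℝ) 1 by constructor <;> norm_num)]
      with t ht using hall t ht
  have hmap : Tendsto (fun t : ℝ => ((y, t) : E × ℝ)) (𝓝[>] (0:ℝ)) ((𝓝 y) ×ˢ (𝓝[>] (0:ℝ))) :=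
    tendsto_const_nhds.prodMk tendsto_id
  exact hmap.frequently hev.frequently

theorem stmt_15 (n : ℕ) (f : EuclideanSpace ℝ (Fin n) → ℝ) (hf : LocallyLipschitz f)
    (c : ℝ) (hc : 0 < c)
    (x : EuclideanSpace ℝ (Fin n))
    -- f is lower-C¹ at x (approximately convex) or upper-C¹ at x (−f approximately convex)
    (hC1 : (∀ ε > (0:ℝ), ∃ δ > (0:ℝ), ∀ y ∈ ball x δ, ∀ z ∈ ball x δ, ∀ t ∈ Icc (0:ℝ) 1,
        f (t • y + (1 - t) • z) ≤ t * f y + (1 - t) * f z + ε * (t * (1 - t)) * ‖y - z‖) ∨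
      (∀ ε > (0:ℝ), ∃ δ > (0:ℝ), ∀ y ∈ ball x δ, ∀ z ∈ ball x δ, ∀ t ∈ Icc (0:ℝ) 1,
        -(f (t • y + (1 - t) • z)) ≤ t * (-(f y)) + (1 - t) * (-(f z)) +
          ε * (t * (1 - t)) * ‖y - z‖))
    (xj yj : ℕ → EuclideanSpace ℝ (Fin n))
    (hxj : Tendsto xj atTop (𝓝 x)) (hyj : Tendsto yj atTop (𝓝 x))
    -- tangent subgradients at the null steps, for the downshifted tangent planes
    (gj : ℕ → EuclideanSpace ℝ (Fin n))
    (hgj : ∀ j, ∀ d, ⟪gj j, d⟫ ≤ clarkeDeriv f (yj j) d)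
    (sj : ℕ → ℝ)
    (hsj : ∀ j, sj j =
      max (f (yj j) + ⟪gj j, xj j - yj j⟫ - f (xj j) + c * ‖yj j - xj j‖ ^ 2) 0)
    -- subgradients at the serious iterates attaining the Clarke derivative (standard planes)
    (hj : ℕ → EuclideanSpace ℝ (Fin n))
    (hhj : ∀ j, ∀ d, ⟪hj j, d⟫ ≤ clarkeDeriv f (xj j) d)
    (hattain : ∀ j, ⟪hj j, yj j - xj j⟫ = clarkeDeriv f (xj j) (yj j - xj j)) :
    ∃ εj : ℕ → ℝ, (∀ j, 0 < εj j) ∧ Tendsto εj atTop (𝓝 0) ∧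
      ∀ j, f (yj j) ≤
        max (f (yj j) - sj j) (f (xj j) + ⟪hj j, yj j - xj j⟫) + εj j * ‖yj j - xj j‖ := by
  classical
  have hcont : Continuous f := hf.continuous
  set D : ℕ → ℝ :=
    fun j => f (yj j) - max (f (yj j) - sj j) (f (xj j) + ⟪hj j, yj j - xj j⟫) with hDdef
  -- the key estimate
  have key : ∀ ε > (0:ℝ), ∀ᶠ j in atTop, D j ≤ ε * ‖yj j - xj j‖ := by
    intro ε hε
    rcases hC1 with hlow | hup
    · -- lower-C¹ case: bound the downshift
      obtain ⟨δ, hδ, hac⟩ := hlow (ε/2) (by linarith)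
      have hev1 : ∀ᶠ j in atTop, yj j ∈ ball x (δ/2) :=
        hyj.eventually (isOpen_ball.eventually_mem (mem_ball_self (by linarith)))
      have hev2 : ∀ᶠ j in atTop, xj j ∈ ball x (δ/2) :=
        hxj.eventually (isOpen_ball.eventually_mem (mem_ball_self (by linarith)))
      have hnt : Tendsto (fun j => c * ‖yj j - xj j‖) atTop (𝓝 0) := by
        have := ((hyj.sub hxj).norm).const_mul c
        simpa using this
      have hev3 : ∀ᶠ j in atTop, c * ‖yj j - xj j‖ ≤ ε/2 :=
        hnt.eventually (eventually_le_nhds (by linarith))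
      filter_upwards [hev1, hev2, hev3] with j h1 h2 h3
      have hcl := clarke_le f hf hcont (ε/2) δ (by linarith) x (yj j) (xj j - yj j) h1
        (by rw [show yj j + (xj j - yj j) = xj j from by abel]; exact h2) hac
      rw [show yj j + (xj j - yj j) = xj j from by abel] at hcl
      have hg : ⟪gj j, xj j - yj j⟫ ≤ clarkeDeriv f (yj j) (xj j - yj j) := hgj j _
      have hrev : ‖xj j - yj j‖ = ‖yj j - xj j‖ := norm_sub_rev _ _
      have hsb : sj j ≤ ε * ‖yj j - xj j‖ := by
        rw [hsj j]
        have hnn : (0:ℝ) ≤ ε * ‖yj j - xj j‖ := mul_nonneg hε.le (norm_nonneg _)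
        refine max_le ?_ hnn
        have hsq : c * ‖yj j - xj j‖^2 ≤ (ε/2) * ‖yj j - xj j‖ := by
          rw [sq, ← mul_assoc]
          exact mul_le_mul_of_nonneg_right h3 (norm_nonneg _)
        rw [hrev] at hcl
        linarith
      have hmax := le_max_left (f (yj j) - sj j) (f (xj j) + ⟪hj j, yj j - xj j⟫)
      simp only [hDdef]
      linarith
    · -- upper-C¹ case: bound the gap of the exact plane
      obtain ⟨δ, hδ, hac⟩ := hup ε hε
      have hev1 : ∀ᶠ j in atTop, yj j ∈ ball x δ :=
        hyj.eventually (isOpen_ball.eventually_mem (mem_ball_self hδ))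
      have hev2 : ∀ᶠ j in atTop, xj j ∈ ball x δ :=
        hxj.eventually (isOpen_ball.eventually_mem (mem_ball_self hδ))
      filter_upwards [hev1, hev2] with j h1 h2
      have hlc := le_clarke f hf ε δ hε.le x (xj j) (yj j - xj j) h2
        (by rw [show xj j + (yj j - xj j) = yj j from by abel]; exact h1) hac
      rw [show xj j + (yj j - xj j) = yj j from by abel, ← hattain j] at hlc
      have hmax := le_max_right (f (yj j) - sj j) (f (xj j) + ⟪hj j, yj j - xj j⟫)
      simp only [hDdef]
      linarith
  -- D j ≤ 0 in the degenerate case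
  have hD0 : ∀ j, yj j = xj j → D j ≤ 0 := by
    intro j hj'
    have h2 : f (yj j) ≤ f (xj j) + ⟪hj j, yj j - xj j⟫ := by
      rw [hj', sub_self, inner_zero_right, add_zero]
    have hmax := le_max_right (f (yj j) - sj j) (f (xj j) + ⟪hj j, yj j - xj j⟫)
    simp only [hDdef]
    linarith
  set q : ℕ → ℝ := fun j => max (‖yj j - xj j‖⁻¹ * D j) 0 with hqdef
  have hq0 : ∀ j, 0 ≤ q j := fun j => le_max_right _ _
  refine ⟨fun j => q j + (1:ℝ)/(j+1), fun j => ?_, ?_, fun j => ?_⟩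
  · have h1 : (0:ℝ) < 1/(j+1) := by positivity
    linarith [hq0 j]
  · have h1 : Tendsto (fun j : ℕ => (1:ℝ)/(j+1)) atTop (𝓝 0) :=
      tendsto_one_div_add_atTop_nhds_zero_nat
    have h2 : Tendsto q atTop (𝓝 0) := by
      rw [NormedAddCommGroup.tendsto_nhds_zero]
      intro ε hε
      filter_upwards [key (ε/2) (by linarith)] with j hkj
      rw [Real.norm_eq_abs, abs_of_nonneg (hq0 j)]
      have hinv : ‖yj j - xj j‖⁻¹ * D j ≤ ε/2 := by
        rcases eq_or_lt_of_le (norm_nonneg (yj j - xj j)) with h0 | h0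
        · rw [← h0, inv_zero, zero_mul]; linarith
        · rw [inv_mul_le_iff₀ h0, mul_comm]
          exact hkj
      have : q j ≤ ε/2 := max_le hinv (by linarith)
      linarith
    simpa using h2.add h1
  · rcases eq_or_lt_of_le (norm_nonneg (yj j - xj j)) with h0 | h0
    · have hyx : yj j = xj j := sub_eq_zero.mp (norm_eq_zero.mp h0.symm)
      have hD := hD0 j hyx
      simp only [hDdef] at hD
      rw [← h0, mul_zero, add_zero]
      linarith
    · have hDle : D j ≤ q j * ‖yj j - xj j‖ := by
        have heq : D j = ‖yj j - xj j‖ * (‖yj j - xj j‖⁻¹ * D j) := by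
          field_simp
        rw [heq]
        calc ‖yj j - xj j‖ * (‖yj j - xj j‖⁻¹ * D j)
            ≤ ‖yj j - xj j‖ * q j :=
              mul_le_mul_of_nonneg_left (le_max_left _ _) (norm_nonneg _)
        _ = q j * ‖yj j - xj j‖ := mul_comm _ _
      have hcoef : q j * ‖yj j - xj j‖ ≤ (q j + 1/(j+1)) * ‖yj j - xj j‖ := by
        apply mul_le_mul_of_nonneg_right _ (norm_nonneg _)
        have : (0:ℝ) < 1/(j+1) := by positivity
        linarith
      simp only [hDdef] at hDle
      linarith
end
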